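/- (Gaussian Annulus Theorem) There exists an absolute constant $c > 0$ such that for a standard Gaussian vector $Z$ in $\mathbb{R}^d$ and any $t \ge 0$, $\mathbb{P}(|\|Z\| - \sqrt{d}| \ge t) \le 2\exp(-ct^2)$. -/

import Mathlib

open MeasureTheory ProbabilityTheory Real

/-! The squared norm `S = ∑ Zᵢ²` is a sum of `d` independent `χ²₁` variables, each with moment
generating function `(1 - 2λ)^(-1/2) ≤ exp (λ + 3λ²)` for `λ ≤ 1/6`. Chernoff's bound on both sides,
with `λ` optimised, gives `P(|S - d| ≥ s) ≤ 2 exp (-r / 12)` whenever `r ≤ s` and `r d ≤ s²`.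
Finally `|√S - √d| ≥ t` forces `|S - d| ≥ t · max t √d`, and `r = t²` is admissible for that `s`. -/

lemma gaussianPDFReal_mul_exp_mul_sq (b x : ℝ) :
    gaussianPDFReal 0 1 x * exp (b * x ^ 2) = (√(2 * π))⁻¹ * exp (-(1 / 2 - b) * x ^ 2) := by
  rw [gaussianPDFReal, mul_assoc, ← exp_add]
  push_cast
  ring_nf

lemma integrable_exp_mul_sq_gaussianReal {b : ℝ} (hb : b < 1 / 2) :
    Integrable (fun x ↦ exp (b * x ^ 2)) (gaussianReal 0 1) := by
  rw [gaussianReal_of_var_ne_zero 0 one_ne_zero, integrable_withDensity_iff_integrable_smul'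
    (measurable_gaussianPDF 0 1) (ae_of_all _ fun _ ↦ gaussianPDF_lt_top)]
  simp_rw [toReal_gaussianPDF, smul_eq_mul, gaussianPDFReal_mul_exp_mul_sq]
  exact (integrable_exp_neg_mul_sq (by linarith)).const_mul _

lemma mgf_sq_gaussianReal {b : ℝ} (hb : b < 1 / 2) :
    mgf (fun x ↦ x ^ 2) (gaussianReal 0 1) b = (√(1 - 2 * b))⁻¹ := by
  rw [mgf, integral_gaussianReal_eq_integral_smul one_ne_zero]
  simp_rw [smul_eq_mul, gaussianPDFReal_mul_exp_mul_sq]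
  rw [integral_const_mul, integral_gaussian,
    show π / (1 / 2 - b) = 2 * π / (1 - 2 * b) by field_simp,
    sqrt_div (by positivity)]
  have : 0 < √(1 - 2 * b) := sqrt_pos.mpr (by linarith)
  have : 0 < √(2 * π) := by positivity
  field_simp

lemma inv_sqrt_one_sub_two_mul_le_exp {l : ℝ} (hl : l ≤ 1 / 6) :
    (√(1 - 2 * l))⁻¹ ≤ exp (l + 3 * l ^ 2) := by
  have hpos : 0 < 1 - 2 * l := by linarith
  have hinv : (1 - 2 * l)⁻¹ ≤ 1 + 2 * l + 6 * l ^ 2 := by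
    rw [inv_le_iff_one_le_mul₀ hpos]
    nlinarith [sq_nonneg l]
  have hlog : -(2 * l + 6 * l ^ 2) ≤ log (1 - 2 * l) := by
    linarith [one_sub_inv_le_log_of_pos hpos]
  have hsqrt : exp (-(l + 3 * l ^ 2)) ≤ √(1 - 2 * l) := by
    rw [le_sqrt (exp_pos _).le hpos.le, ← exp_nat_mul, ← exp_log hpos]
    exact exp_le_exp.mpr (by push_cast; linarith)
  calc (√(1 - 2 * l))⁻¹ ≤ (exp (-(l + 3 * l ^ 2)))⁻¹ := inv_anti₀ (exp_pos _) hsqrt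
    _ = exp (l + 3 * l ^ 2) := by rw [exp_neg, inv_inv]

lemma exists_chernoff_exponent {n r s : ℝ} (hrs : r ≤ s) (hrn : r * n ≤ s ^ 2) :
    ∃ l, 0 ≤ l ∧ l ≤ 1 / 6 ∧ -l * s + 3 * n * l ^ 2 ≤ -r / 12 := by
  rcases le_or_gt s 0 with hs | hs
  · exact ⟨0, le_rfl, by norm_num, by linarith⟩
  rcases le_or_gt s n with hsn | hns
  · have hn : 0 < n := hs.trans_le hsn
    refine ⟨s / (6 * n), by positivity, by rw [div_le_iff₀ (by positivity)]; linarith, ?_⟩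
    have : -(s / (6 * n)) * s + 3 * n * (s / (6 * n)) ^ 2 = -(s ^ 2 / n) / 12 := by
      field_simp; ring
    rw [this]
    linarith [(le_div_iff₀ hn).mpr hrn]
  · exact ⟨1 / 6, by norm_num, le_rfl, by nlinarith⟩

lemma mul_max_le_abs_sq_sub_sq {a b t : ℝ} (ha : 0 ≤ a) (hb : 0 ≤ b) (ht : t ≤ |a - b|) :
    t * max t b ≤ |a ^ 2 - b ^ 2| := by
  rw [sq_sub_sq, abs_mul, abs_of_nonneg (by positivity : 0 ≤ a + b)]
  rcases le_or_gt t 0 with ht0 | ht0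
  · nlinarith [le_max_right t b, abs_nonneg (a - b)]
  · have hab : |a - b| ≤ a + b := abs_sub_le_iff.mpr ⟨by linarith, by linarith⟩
    have : max t b ≤ a + b := max_le (ht.trans hab) (by linarith)
    nlinarith [abs_nonneg (a - b)]

namespace ProbabilityTheory

variable {Ω : Type*} {mΩ : MeasurableSpace Ω} {μ : Measure Ω}

lemma measure_abs_sub_ge_le_of_mgf_le [IsFiniteMeasure μ] {Y : Ω → ℝ} {m c l s : ℝ} (hl : 0 ≤ l)
    (h_int : ∀ u, |u| ≤ l → Integrable (fun ω ↦ exp (u * Y ω)) μ)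
    (h_mgf : ∀ u, |u| ≤ l → mgf Y μ u ≤ exp (u * m + c * u ^ 2)) :
    μ.real {ω | s ≤ |Y ω - m|} ≤ 2 * exp (-l * s + c * l ^ 2) := by
  have hl_abs : |l| ≤ l := (abs_of_nonneg hl).le
  have hnl_abs : |-l| ≤ l := by rw [abs_neg]; exact hl_abs
  have h_upper : μ.real {ω | m + s ≤ Y ω} ≤ exp (-l * s + c * l ^ 2) :=
    calc μ.real {ω | m + s ≤ Y ω} ≤ exp (-l * (m + s)) * mgf Y μ l :=
          measure_ge_le_exp_mul_mgf _ hl (h_int l hl_abs)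
      _ ≤ exp (-l * (m + s)) * exp (l * m + c * l ^ 2) := by gcongr; exact h_mgf l hl_abs
      _ = exp (-l * s + c * l ^ 2) := by rw [← exp_add]; ring_nf
  have h_lower : μ.real {ω | Y ω ≤ m - s} ≤ exp (-l * s + c * l ^ 2) :=
    calc μ.real {ω | Y ω ≤ m - s} ≤ exp (- -l * (m - s)) * mgf Y μ (-l) :=
          measure_le_le_exp_mul_mgf _ (by linarith) (h_int (-l) hnl_abs)
      _ ≤ exp (- -l * (m - s)) * exp (-l * m + c * (-l) ^ 2) := by
          gcongr; exact h_mgf (-l) hnl_abs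
      _ = exp (-l * s + c * l ^ 2) := by rw [← exp_add]; ring_nf
  calc μ.real {ω | s ≤ |Y ω - m|}
      ≤ μ.real ({ω | m + s ≤ Y ω} ∪ {ω | Y ω ≤ m - s}) := by
        refine measureReal_mono fun ω hω ↦ ?_
        rcases le_abs'.mp (show s ≤ |Y ω - m| from hω) with h | h
        · exact Or.inr (show Y ω ≤ m - s by linarith)
        · exact Or.inl (show m + s ≤ Y ω by linarith)
    _ ≤ μ.real {ω | m + s ≤ Y ω} + μ.real {ω | Y ω ≤ m - s} := measureReal_union_le _ _
    _ ≤ 2 * exp (-l * s + c * l ^ 2) := by linarith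

lemma integrable_exp_mul_sq_of_map_eq_gaussianReal {X : Ω → ℝ} {b : ℝ} (hX : Measurable X)
    (hlaw : μ.map X = gaussianReal 0 1) (hb : b < 1 / 2) :
    Integrable (fun ω ↦ exp (b * X ω ^ 2)) μ := by
  have h := integrable_exp_mul_sq_gaussianReal hb
  rw [← hlaw] at h
  exact h.comp_measurable hX

lemma mgf_sq_of_map_eq_gaussianReal {X : Ω → ℝ} {b : ℝ} (hX : Measurable X)
    (hlaw : μ.map X = gaussianReal 0 1) (hb : b < 1 / 2) :
    mgf (fun ω ↦ X ω ^ 2) μ b = (√(1 - 2 * b))⁻¹ := by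
  rw [← mgf_sq_gaussianReal hb, ← hlaw, mgf_map hX.aemeasurable (by fun_prop)]
  rfl

variable {ι : Type*} {Z : ι → Ω → ℝ} {b : ℝ}

lemma iIndepFun.sq (hindep : iIndepFun Z μ) : iIndepFun (fun i ω ↦ Z i ω ^ 2) μ :=
  hindep.comp (fun _ x ↦ x ^ 2) fun _ ↦ by fun_prop

variable [Fintype ι]

lemma iIndepFun.integrable_exp_mul_sum_sq (hindep : iIndepFun Z μ) (hZ : ∀ i, Measurable (Z i))
    (hlaw : ∀ i, μ.map (Z i) = gaussianReal 0 1) (hb : b < 1 / 2) :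
    Integrable (fun ω ↦ exp (b * ∑ i, Z i ω ^ 2)) μ := by
  have := hindep.isProbabilityMeasure
  simpa [Finset.sum_apply] using
    hindep.sq.integrable_exp_mul_sum (fun i ↦ (hZ i).pow_const 2) fun i _ ↦
      integrable_exp_mul_sq_of_map_eq_gaussianReal (hZ i) (hlaw i) hb

lemma iIndepFun.mgf_sum_sq (hindep : iIndepFun Z μ) (hZ : ∀ i, Measurable (Z i))
    (hlaw : ∀ i, μ.map (Z i) = gaussianReal 0 1) (hb : b < 1 / 2) :
    mgf (fun ω ↦ ∑ i, Z i ω ^ 2) μ b = (√(1 - 2 * b))⁻¹ ^ Fintype.card ι := by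
  rw [← Finset.sum_fn, hindep.sq.mgf_sum fun i ↦ (hZ i).pow_const 2]
  simp [mgf_sq_of_map_eq_gaussianReal (hZ _) (hlaw _) hb]

lemma iIndepFun.mgf_sum_sq_le (hindep : iIndepFun Z μ) (hZ : ∀ i, Measurable (Z i))
    (hlaw : ∀ i, μ.map (Z i) = gaussianReal 0 1) (hb : b ≤ 1 / 6) :
    mgf (fun ω ↦ ∑ i, Z i ω ^ 2) μ b
      ≤ exp (b * Fintype.card ι + 3 * Fintype.card ι * b ^ 2) := by
  rw [hindep.mgf_sum_sq hZ hlaw (by linarith)]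
  calc (√(1 - 2 * b))⁻¹ ^ Fintype.card ι ≤ exp (b + 3 * b ^ 2) ^ Fintype.card ι := by
        gcongr; exact inv_sqrt_one_sub_two_mul_le_exp hb
    _ = _ := by rw [← exp_nat_mul]; ring_nf

end ProbabilityTheory

/-- Gaussian Annulus Theorem: the norm of a standard Gaussian vector in `ℝ^d`
concentrates in a constant-width shell at radius `√d`, with sub-Gaussian tails. -/
theorem gaussian_annulus :
    ∃ c : ℝ, 0 < c ∧
      ∀ (Ω : Type) (_ : MeasurableSpace Ω) (μ : Measure Ω), IsProbabilityMeasure μ →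
      ∀ (d : ℕ) (Z : Fin d → Ω → ℝ),
        (∀ i, Measurable (Z i)) →
        iIndepFun (m := fun _ => Real.measurableSpace) Z μ →
        (∀ i, Measure.map (Z i) μ = gaussianReal 0 1) →
        ∀ t : ℝ, 0 ≤ t →
          (μ {ω | t ≤ |Real.sqrt (∑ i, (Z i ω) ^ 2) - Real.sqrt d|}).toReal ≤
            2 * Real.exp (-c * t ^ 2) := by
  refine ⟨1 / 12, by norm_num, fun Ω _ μ _ d Z hZ hindep hlaw t ht ↦ ?_⟩
  have hS : ∀ ω, 0 ≤ ∑ i, Z i ω ^ 2 := fun ω ↦ Finset.sum_nonneg fun i _ ↦ sq_nonneg _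
  have hd : (d : ℝ) ≤ max t √d ^ 2 :=
    calc (d : ℝ) = √d ^ 2 := (sq_sqrt d.cast_nonneg).symm
      _ ≤ max t √d ^ 2 := by gcongr; exact le_max_right _ _
  obtain ⟨l, hl0, hl6, hexp⟩ :=
    exists_chernoff_exponent (n := d) (r := t ^ 2) (s := t * max t √d)
      (by nlinarith [le_max_left t √d])
      (by rw [mul_pow]; exact mul_le_mul_of_nonneg_left hd (sq_nonneg t))
  calc μ.real {ω | t ≤ |√(∑ i, Z i ω ^ 2) - √d|}
      ≤ μ.real {ω | t * max t √d ≤ |∑ i, Z i ω ^ 2 - d|} := by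
        refine measureReal_mono fun ω hω ↦ ?_
        have := mul_max_le_abs_sq_sub_sq (sqrt_nonneg _) (sqrt_nonneg _) hω
        rwa [sq_sqrt (hS ω), sq_sqrt (Nat.cast_nonneg _)] at this
    _ ≤ 2 * exp (-l * (t * max t √d) + 3 * d * l ^ 2) := by
        refine measure_abs_sub_ge_le_of_mgf_le hl0
          (fun u hu ↦ hindep.integrable_exp_mul_sum_sq hZ hlaw (by linarith [le_abs_self u]))
          fun u hu ↦ ?_
        simpa only [Fintype.card_fin] using
          hindep.mgf_sum_sq_le hZ hlaw (b := u) (by linarith [le_abs_self u])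
    _ ≤ 2 * exp (-(1 / 12) * t ^ 2) := by gcongr; linarith
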